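/- arXiv:2203.16906 — 2 statements merged into one kernel-verified Lean document; each statement's English description precedes it below -/
import Mathlib

section
/- Let U ⊆ ℂ be open and let h : ℂ → ℂ be twice continuously differentiable in the real sense on U, with Im(h(z)) > 0 for all z ∈ U, and suppose h satisfies the harmonic map equation into the hyperbolic upper half-plane: ∂_z̄(h_z)(z) + (i / Im(h(z)))·h_z(z)·h_z̄(z) = 0 for all z ∈ U. Then the function Φ : U → ℂ defined by Φ(z) = h_z(z)·conj(h_z̄(z)) / (Im(h(z)))² is complex-differentiable (holomorphic) on U. -/
/-!
By the Cauchy–Riemann criterion it suffices to show `∂_z̄ Φ = 0`. The Leibniz rules for `∂_z̄`,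
together with `∂_z̄ (conj g) = conj (∂_z g)`, `∂_z̄ (Im h) = (i/2)(conj h_z − h_z̄)` and the
symmetry `∂_z (h_z̄) = ∂_z̄ (h_z)` of second derivatives, express `∂_z̄ Φ` through `h_z`, `h_z̄`,
`Im h` and `∂_z̄ (h_z)`; substituting the harmonic map equation for the latter, the two resulting
terms cancel.
-/

/-- The Wirtinger derivative `h_z = (1/2)(D_x h − i·D_y h)`. -/
noncomputable def wdz (h : ℂ → ℂ) (z : ℂ) : ℂ :=
  (1 / 2) * (fderiv ℝ h z 1 - Complex.I * fderiv ℝ h z Complex.I)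

/-- The Wirtinger derivative `h_z̄ = (1/2)(D_x h + i·D_y h)`. -/
noncomputable def wdzbar (h : ℂ → ℂ) (z : ℂ) : ℂ :=
  (1 / 2) * (fderiv ℝ h z 1 + Complex.I * fderiv ℝ h z Complex.I)

open Complex ComplexConjugate

section Wirtinger

variable {f g : ℂ → ℂ} {z : ℂ} {L : ℂ →L[ℝ] ℂ}

theorem HasFDerivAt.wdz_eq (hf : HasFDerivAt f L z) : wdz f z = 1 / 2 * (L 1 - I * L I) := by
  rw [wdz, hf.fderiv]

theorem HasFDerivAt.wdzbar_eq (hf : HasFDerivAt f L z) :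
    wdzbar f z = 1 / 2 * (L 1 + I * L I) := by
  rw [wdzbar, hf.fderiv]

theorem wdzbar_mul (hf : DifferentiableAt ℝ f z) (hg : DifferentiableAt ℝ g z) :
    wdzbar (fun w => f w * g w) z = wdzbar f z * g z + f z * wdzbar g z := by
  refine (hf.hasFDerivAt.mul hg.hasFDerivAt).wdzbar_eq.trans ?_
  rw [wdzbar, wdzbar]
  simp only [add_apply, smul_apply, smul_eq_mul]
  ring

theorem wdzbar_comp_of_hasDerivAt {φ : ℂ → ℂ} {φ' : ℂ} (hφ : HasDerivAt φ φ' (g z))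
    (hg : DifferentiableAt ℝ g z) : wdzbar (fun w => φ (g w)) z = φ' * wdzbar g z := by
  refine ((hφ.hasFDerivAt.restrictScalars ℝ).comp z hg.hasFDerivAt).wdzbar_eq.trans ?_
  rw [wdzbar]
  simp only [ContinuousLinearMap.coe_comp, Function.comp_apply,
    ContinuousLinearMap.coe_restrictScalars', ContinuousLinearMap.toSpanSingleton_apply,
    smul_eq_mul]
  ring

theorem wdzbar_div (hf : DifferentiableAt ℝ f z) (hg : DifferentiableAt ℝ g z) (hgz : g z ≠ 0) :
    wdzbar (fun w => f w / g w) z = (wdzbar f z * g z - f z * wdzbar g z) / g z ^ 2 := by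
  simp only [div_eq_mul_inv]
  rw [wdzbar_mul (g := fun w => (g w)⁻¹) hf (hg.inv hgz),
    wdzbar_comp_of_hasDerivAt (φ := Inv.inv) (hasDerivAt_inv hgz) hg]
  field_simp
  ring

theorem wdzbar_pow (hg : DifferentiableAt ℝ g z) (n : ℕ) :
    wdzbar (fun w => g w ^ n) z = n * g z ^ (n - 1) * wdzbar g z :=
  wdzbar_comp_of_hasDerivAt (hasDerivAt_pow n (g z)) hg

theorem wdzbar_conj (hf : DifferentiableAt ℝ f z) :
    wdzbar (fun w => conj (f w)) z = conj (wdz f z) := by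
  refine (conjCLE.hasFDerivAt.comp z hf.hasFDerivAt).wdzbar_eq.trans ?_
  rw [wdz]
  simp only [ContinuousLinearMap.coe_comp, Function.comp_apply, ContinuousLinearEquiv.coe_coe,
    conjCLE_apply, map_mul, map_sub, map_one, map_div₀, map_ofNat, conj_I]
  ring

theorem wdzbar_im (hf : DifferentiableAt ℝ f z) :
    wdzbar (fun w => ((f w).im : ℂ)) z = I / 2 * (conj (wdz f z) - wdzbar f z) := by
  refine ((ofRealCLM.comp imCLM).hasFDerivAt.comp z hf.hasFDerivAt).wdzbar_eq.trans ?_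
  rw [wdz, wdzbar]
  apply Complex.ext <;> simp <;> ring

theorem differentiableAt_of_wdzbar_eq_zero (hf : DifferentiableAt ℝ f z) (h0 : wdzbar f z = 0) :
    DifferentiableAt ℂ f z := by
  have hI : fderiv ℝ f z I = I * fderiv ℝ f z 1 := by
    rw [wdzbar] at h0
    linear_combination (-2 * I) * h0 + fderiv ℝ f z I * I_sq
  refine (hasFDerivAt_of_restrictScalars ℝ (f' := fderiv ℝ f z 1 • 1) hf.hasFDerivAt
    ?_).differentiableAt
  refine ContinuousLinearMap.coe_injective (basisOneI.ext fun i => ?_)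
  fin_cases i <;> simp [hI, mul_comm]

end Wirtinger

section SecondOrder

variable {f : ℂ → ℂ} {z : ℂ} {D : ℂ →L[ℝ] ℂ →L[ℝ] ℂ}

theorem ContDiffAt.hasFDerivAt_fderiv (hf : ContDiffAt ℝ 2 f z) :
    HasFDerivAt (fderiv ℝ f) (fderiv ℝ (fderiv ℝ f) z) z :=
  ((hf.fderiv_right (m := 1) (by norm_num)).differentiableAt one_ne_zero).hasFDerivAt

theorem hasFDerivAt_wdz (hD : HasFDerivAt (fderiv ℝ f) D z) :
    HasFDerivAt (wdz f) ((1 / 2 : ℂ) • (D.flip 1 - I • D.flip I)) z := by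
  refine (((hD.clm_apply (hasFDerivAt_const 1 z)).sub
    ((hD.clm_apply (hasFDerivAt_const I z)).const_mul I)).const_mul (1 / 2 : ℂ)).congr_fderiv ?_
  ext c
  simp

theorem hasFDerivAt_wdzbar (hD : HasFDerivAt (fderiv ℝ f) D z) :
    HasFDerivAt (wdzbar f) ((1 / 2 : ℂ) • (D.flip 1 + I • D.flip I)) z := by
  refine (((hD.clm_apply (hasFDerivAt_const 1 z)).add
    ((hD.clm_apply (hasFDerivAt_const I z)).const_mul I)).const_mul (1 / 2 : ℂ)).congr_fderiv ?_
  ext c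
  simp

theorem ContDiffAt.differentiableAt_wdz (hf : ContDiffAt ℝ 2 f z) :
    DifferentiableAt ℝ (wdz f) z :=
  (hasFDerivAt_wdz hf.hasFDerivAt_fderiv).differentiableAt

theorem ContDiffAt.differentiableAt_wdzbar (hf : ContDiffAt ℝ 2 f z) :
    DifferentiableAt ℝ (wdzbar f) z :=
  (hasFDerivAt_wdzbar hf.hasFDerivAt_fderiv).differentiableAt

theorem ContDiffAt.wdz_wdzbar_comm (hf : ContDiffAt ℝ 2 f z) :
    wdz (wdzbar f) z = wdzbar (wdz f) z := by
  rw [(hasFDerivAt_wdzbar hf.hasFDerivAt_fderiv).wdz_eq,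
    (hasFDerivAt_wdz hf.hasFDerivAt_fderiv).wdzbar_eq]
  simp only [smul_apply, add_apply, sub_apply, ContinuousLinearMap.flip_apply, smul_eq_mul,
    hf.isSymmSndFDerivAt (by simp) 1 I]
  ring

end SecondOrder

/-- The Hopf differential of a harmonic map into the hyperbolic upper half-plane is
holomorphic: if `h` is C² on an open set `U`, maps into the upper half-plane, and
satisfies `∂_z̄(h_z) + (i / Im h)·h_z·h_z̄ = 0` on `U`, then
`Φ(z) = h_z(z)·conj(h_z̄(z))/(Im h(z))²` is holomorphic on `U`. -/
theorem stmt_5 (U : Set ℂ) (hU : IsOpen U) (h : ℂ → ℂ)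
    (hC2 : ContDiffOn ℝ 2 h U)
    (him : ∀ z ∈ U, 0 < (h z).im)
    (hharm : ∀ z ∈ U,
      wdzbar (fun w => wdz h w) z
        + (Complex.I / ((h z).im : ℂ)) * wdz h z * wdzbar h z = 0) :
    DifferentiableOn ℂ
      (fun z => wdz h z * (starRingEnd ℂ) (wdzbar h z) / (((h z).im : ℂ)) ^ 2) U := by
  intro z hz
  have hf : ContDiffAt ℝ 2 h z := hC2.contDiffAt (hU.mem_nhds hz)
  have hh : DifferentiableAt ℝ h z := hf.differentiableAt two_ne_zero
  have hA : DifferentiableAt ℝ (wdz h) z := hf.differentiableAt_wdz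
  have hB : DifferentiableAt ℝ (wdzbar h) z := hf.differentiableAt_wdzbar
  have hB' : DifferentiableAt ℝ (fun w => conj (wdzbar h w)) z :=
    conjCLE.differentiableAt.comp z hB
  have hv : DifferentiableAt ℝ (fun w => ((h w).im : ℂ)) z :=
    (ofRealCLM.comp imCLM).differentiableAt.comp z hh
  have hv0 : ((h z).im : ℂ) ≠ 0 := ofReal_ne_zero.2 (him z hz).ne'
  have hAz : wdzbar (wdz h) z = -(I / (h z).im * wdz h z * wdzbar h z) :=
    eq_neg_of_add_eq_zero_left (hharm z hz)
  have hBz : wdz (wdzbar h) z = -(I / (h z).im * wdz h z * wdzbar h z) :=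
    hf.wdz_wdzbar_comm.trans hAz
  have hΦ : wdzbar (fun w => wdz h w * conj (wdzbar h w) / ((h w).im : ℂ) ^ 2) z = 0 := by
    rw [wdzbar_div (hA.fun_mul hB') (hv.fun_pow 2) (pow_ne_zero 2 hv0), wdzbar_mul hA hB',
      wdzbar_conj hB, wdzbar_pow hv, wdzbar_im hh, hAz, hBz]
    simp only [map_neg, map_mul, map_div₀, conj_I, conj_ofReal]
    field_simp
    ring
  have hΦd : DifferentiableAt ℝ (fun w => wdz h w * conj (wdzbar h w) / ((h w).im : ℂ) ^ 2) z := by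
    simpa only [div_eq_mul_inv] using
      (hA.fun_mul hB').fun_mul ((hv.fun_pow 2).fun_inv (pow_ne_zero 2 hv0))
  exact (differentiableAt_of_wdzbar_eq_zero hΦd hΦ).differentiableWithinAt
end

section
/- Let d > 0 and b ∈ ℝ, and let u : ℂ → ℝ be continuous on the closed ball closedBall(0, d) and twice continuously differentiable on the open ball ball(0, d), satisfying Δu(z) ≥ 2·u(z) for all z ∈ ball(0, d) and u(z) ≤ b for all z ∈ closedBall(0, d). Then u(0) ≤ b / cosh(d). -/
/-!
Put `v = u - c · coshReIm` with `c = b / cosh d`, where `coshReIm z = cosh (re z) · cosh (im z)`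
plays the role of the paper's comparison function `cosh |z|`: it satisfies `Δ coshReIm = 2 coshReIm`
exactly, is smooth, equals `1` at the origin, and dominates `cosh |z|`. Hence `Δv ≥ 2v`, so `v`
cannot have a positive interior maximum (there `Δv ≤ 0`), and `v ≤ 0` on the circle `|z| = d`
because `u ≤ b = c cosh d`. Thus `u 0 - c = v 0 ≤ 0`.
-/

open InnerProductSpace Laplacian Filter Topology Metric
open scoped Nat

/-- The Euclidean Laplacian `Δf = ∂²f/∂x² + ∂²f/∂y²` on `ℂ ≅ ℝ²`. -/
noncomputable def lap (f : ℂ → ℝ) (z : ℂ) : ℝ :=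
  fderiv ℝ (fun w => fderiv ℝ f w 1) z 1
    + fderiv ℝ (fun w => fderiv ℝ f w Complex.I) z Complex.I

theorem IsLocalMax.deriv_deriv_nonpos {f : ℝ → ℝ} {a : ℝ} (h : IsLocalMax f a)
    (hc : ContinuousAt f a) : deriv (deriv f) a ≤ 0 := by
  by_contra! hpos
  -- a positive second derivative would make `a` also a local minimum, so `f` is locally constant
  have hconst : f =ᶠ[𝓝 a] fun _ => f a :=
    (h.and (isLocalMin_of_deriv_deriv_pos hpos h.deriv_eq_zero hc)).mono
      fun _ hx => le_antisymm hx.1 hx.2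
  exact hpos.ne' (by rw [hconst.deriv.deriv_eq]; simp)

theorem fderiv_fderiv_apply_eq_iteratedFDeriv {𝕜 E F : Type*} [NontriviallyNormedField 𝕜]
    [NormedAddCommGroup E] [NormedSpace 𝕜 E] [NormedAddCommGroup F] [NormedSpace 𝕜 F]
    {f : E → F} {x : E} (hf : ContDiffAt 𝕜 2 f x) (v w : E) :
    fderiv 𝕜 (fun y => fderiv 𝕜 f y v) x w = iteratedFDeriv 𝕜 2 f x ![w, v] := by
  have hdiff : DifferentiableAt 𝕜 (fderiv 𝕜 f) x :=
    (hf.fderiv_right (m := 1) le_rfl).differentiableAt one_ne_zero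
  rw [fderiv_clm_apply hdiff (differentiableAt_const v), iteratedFDeriv_two_apply]
  simp

theorem IsLocalMax.fderiv_fderiv_apply_self_nonpos {E : Type*} [NormedAddCommGroup E]
    [NormedSpace ℝ E] {f : E → ℝ} {x : E} (h : IsLocalMax f x) (hf : ContDiffAt ℝ 2 f x)
    (v : E) : fderiv ℝ (fun y => fderiv ℝ f y v) x v ≤ 0 := by
  set γ : ℝ → E := fun t => x + t • v
  have hγ : ∀ t, HasDerivAt γ v t := fun t => by
    simpa [γ] using ((hasDerivAt_id t).smul_const v).const_add x
  have hγ0 : γ 0 = x := by simp [γ]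
  have hγc : ContinuousAt γ 0 := (hγ 0).continuousAt
  have hmax : IsLocalMax (f ∘ γ) 0 := by
    rw [← hγ0] at h
    exact h.comp_continuous hγc
  have hderiv : deriv (f ∘ γ) =ᶠ[𝓝 0] fun t => fderiv ℝ f (γ t) v := by
    have hnear : ∀ᶠ t in 𝓝 (0 : ℝ), DifferentiableAt ℝ f (γ t) := by
      refine hγc.eventually ?_
      rw [hγ0]
      exact (hf.eventually (by simp)).mono fun y hy => hy.differentiableAt two_ne_zero
    filter_upwards [hnear] with t ht
    exact (ht.hasFDerivAt.comp_hasDerivAt t (hγ t)).deriv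
  have hdiff : DifferentiableAt ℝ (fun y => fderiv ℝ f y v) (γ 0) := by
    rw [hγ0]
    exact ((hf.fderiv_right (m := 1) le_rfl).differentiableAt one_ne_zero).clm_apply
      (differentiableAt_const v)
  have hsecond : deriv (deriv (f ∘ γ)) 0 = fderiv ℝ (fun y => fderiv ℝ f y v) x v := by
    rw [hderiv.deriv_eq, ← hγ0]
    exact (hdiff.hasFDerivAt.comp_hasDerivAt 0 (hγ 0)).deriv
  rw [← hsecond]
  exact hmax.deriv_deriv_nonpos (hf.continuousAt.comp_of_eq hγc hγ0)

theorem IsLocalMax.laplacian_nonpos {E : Type*} [NormedAddCommGroup E] [InnerProductSpace ℝ E]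
    [FiniteDimensional ℝ E] {f : E → ℝ} {x : E} (h : IsLocalMax f x) (hf : ContDiffAt ℝ 2 f x) :
    Δ f x ≤ 0 := by
  rw [laplacian_eq_iteratedFDeriv_stdOrthonormalBasis]
  refine Finset.sum_nonpos fun i _ => ?_
  rw [← fderiv_fderiv_apply_eq_iteratedFDeriv hf]
  exact h.fderiv_fderiv_apply_self_nonpos hf _

theorem nonpos_of_laplacian_pos_of_nonpos_on_sphere {E : Type*} [NormedAddCommGroup E]
    [InnerProductSpace ℝ E] [FiniteDimensional ℝ E] {v : E → ℝ} {c z : E} {r : ℝ}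
    (hcont : ContinuousOn v (closedBall c r)) (hC2 : ContDiffOn ℝ 2 v (ball c r))
    (hpos : ∀ y ∈ ball c r, 0 < v y → 0 < Δ v y) (hsphere : ∀ y ∈ sphere c r, v y ≤ 0)
    (hz : z ∈ closedBall c r) : v z ≤ 0 := by
  obtain ⟨y, hy, hmax⟩ := (isCompact_closedBall c r).exists_isMaxOn ⟨z, hz⟩ hcont
  refine (hmax hz).trans ?_
  rw [← ball_union_sphere] at hy
  rcases hy with hy | hy
  · have hlap := (hmax.isLocalMax (closedBall_mem_nhds_of_mem hy)).laplacian_nonpos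
      (hC2.contDiffAt (isOpen_ball.mem_nhds hy))
    exact not_lt.mp fun h => (hpos y hy h).not_ge hlap
  · exact hsphere y hy

theorem Nat.choose_le_choose_two_mul (n k : ℕ) : n.choose k ≤ (2 * n).choose (2 * k) := by
  rcases Nat.lt_or_ge n k with h | h
  · simp [Nat.choose_eq_zero_of_lt h]
  rw [two_mul, two_mul, Nat.add_choose_eq]
  calc n.choose k ≤ n.choose k * n.choose k := Nat.le_mul_of_pos_left _ (Nat.choose_pos h)
    _ ≤ _ := Finset.single_le_sum (f := fun ij : ℕ × ℕ => n.choose ij.1 * n.choose ij.2)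
          (fun _ _ => Nat.zero_le _) (a := (k, k))
          (Finset.HasAntidiagonal.mem_antidiagonal.mpr rfl)

theorem Nat.choose_mul_factorial_two_mul_le (k l : ℕ) :
    (k + l).choose k * ((2 * k)! * (2 * l)!) ≤ (2 * (k + l))! := by
  calc (k + l).choose k * ((2 * k)! * (2 * l)!)
      ≤ (2 * (k + l)).choose (2 * k) * ((2 * k)! * (2 * l)!) :=
        Nat.mul_le_mul_right _ (Nat.choose_le_choose_two_mul _ _)
    _ = (2 * (k + l))! := by
        rw [mul_add, ← mul_assoc, add_comm, ← Nat.add_choose_mul_factorial_mul_factorial,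
          mul_right_comm]

/-- Compare the Taylor coefficients of both sides as power series in `x²` and `y²`. -/
theorem Real.cosh_sqrt_sq_add_sq_le (x y : ℝ) :
    Real.cosh √(x ^ 2 + y ^ 2) ≤ Real.cosh x * Real.cosh y := by
  set a : ℕ → ℝ := fun n => x ^ (2 * n) / (2 * n)!
  set b : ℕ → ℝ := fun n => y ^ (2 * n) / (2 * n)!
  have ha : Summable fun n => ‖a n‖ := by
    simpa [a, Real.norm_of_nonneg, pow_mul, div_nonneg] using (Real.hasSum_cosh x).summable
  have hb : Summable fun n => ‖b n‖ := by
    simpa [b, Real.norm_of_nonneg, pow_mul, div_nonneg] using (Real.hasSum_cosh y).summable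
  have hlhs :
      HasSum (fun n : ℕ => (x ^ 2 + y ^ 2) ^ n / (2 * n)!) (Real.cosh √(x ^ 2 + y ^ 2)) := by
    convert Real.hasSum_cosh √(x ^ 2 + y ^ 2) using 2 with n
    rw [pow_mul, Real.sq_sqrt (by positivity)]
  rw [← (Real.hasSum_cosh x).tsum_eq, ← (Real.hasSum_cosh y).tsum_eq,
    tsum_mul_tsum_eq_tsum_sum_antidiagonal_of_summable_norm ha hb, ← hlhs.tsum_eq]
  refine hlhs.summable.tsum_le_tsum (fun n => ?_)
    (summable_norm_sum_mul_antidiagonal_of_summable_norm ha hb).of_norm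
  rw [(Commute.all _ _).add_pow', Finset.sum_div]
  refine Finset.sum_le_sum fun kl hkl => ?_
  obtain ⟨k, l⟩ := kl
  rw [Finset.HasAntidiagonal.mem_antidiagonal] at hkl
  subst hkl
  have hfact : ((k + l).choose k : ℝ) * ((2 * k)! * (2 * l)!) ≤ (2 * (k + l))! := by
    exact_mod_cast Nat.choose_mul_factorial_two_mul_le k l
  simp only [a, b, nsmul_eq_mul, pow_mul]
  rw [div_mul_div_comm, div_le_div_iff₀ (by positivity) (by positivity)]
  calc ((k + l).choose k * ((x ^ 2) ^ k * (y ^ 2) ^ l)) * ((2 * k)! * (2 * l)!)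
      = ((x ^ 2) ^ k * (y ^ 2) ^ l) * ((k + l).choose k * ((2 * k)! * (2 * l)!)) := by ring
    _ ≤ ((x ^ 2) ^ k * (y ^ 2) ^ l) * (2 * (k + l))! := by gcongr

theorem lap_eq_laplacian {f : ℂ → ℝ} {z : ℂ} (hf : ContDiffAt ℝ 2 f z) : lap f z = Δ f z := by
  rw [lap, laplacian_eq_iteratedFDeriv_complexPlane, fderiv_fderiv_apply_eq_iteratedFDeriv hf,
    fderiv_fderiv_apply_eq_iteratedFDeriv hf]

theorem hasFDerivAt_re_mul_im {a b : ℝ → ℝ} (ha : Differentiable ℝ a) (hb : Differentiable ℝ b)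
    (z : ℂ) :
    HasFDerivAt (fun w : ℂ => a w.re * b w.im)
      (a z.re • deriv b z.im • Complex.imCLM + b z.im • deriv a z.re • Complex.reCLM) z :=
  ((ha z.re).hasDerivAt.comp_hasFDerivAt z Complex.reCLM.hasFDerivAt).mul
    ((hb z.im).hasDerivAt.comp_hasFDerivAt z Complex.imCLM.hasFDerivAt)

theorem fderiv_re_mul_im_apply_one {a b : ℝ → ℝ} (ha : Differentiable ℝ a)
    (hb : Differentiable ℝ b) (z : ℂ) :
    fderiv ℝ (fun w : ℂ => a w.re * b w.im) z 1 = deriv a z.re * b z.im := by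
  simp [(hasFDerivAt_re_mul_im ha hb z).fderiv, mul_comm]

theorem fderiv_re_mul_im_apply_I {a b : ℝ → ℝ} (ha : Differentiable ℝ a)
    (hb : Differentiable ℝ b) (z : ℂ) :
    fderiv ℝ (fun w : ℂ => a w.re * b w.im) z Complex.I = a z.re * deriv b z.im := by
  simp [(hasFDerivAt_re_mul_im ha hb z).fderiv]

noncomputable def coshReIm (z : ℂ) : ℝ := Real.cosh z.re * Real.cosh z.im

theorem contDiff_coshReIm {n : WithTop ℕ∞} : ContDiff ℝ n coshReIm :=
  (Real.contDiff_cosh.comp Complex.reCLM.contDiff).mul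
    (Real.contDiff_cosh.comp Complex.imCLM.contDiff)

theorem coshReIm_zero : coshReIm 0 = 1 := by simp [coshReIm]

theorem laplacian_coshReIm (z : ℂ) : Δ coshReIm z = 2 * coshReIm z := by
  have h1 : (fun w => fderiv ℝ coshReIm w 1) = fun w => Real.sinh w.re * Real.cosh w.im :=
    funext fun w => by
      rw [← Real.deriv_cosh]
      exact fderiv_re_mul_im_apply_one Real.differentiable_cosh Real.differentiable_cosh w
  have hI :
      (fun w => fderiv ℝ coshReIm w Complex.I) = fun w => Real.cosh w.re * Real.sinh w.im :=
    funext fun w => by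
      rw [← Real.deriv_cosh]
      exact fderiv_re_mul_im_apply_I Real.differentiable_cosh Real.differentiable_cosh w
  rw [← lap_eq_laplacian contDiff_coshReIm.contDiffAt, lap, h1, hI,
    fderiv_re_mul_im_apply_one Real.differentiable_sinh Real.differentiable_cosh,
    fderiv_re_mul_im_apply_I Real.differentiable_cosh Real.differentiable_sinh,
    Real.deriv_sinh, coshReIm]
  ring

theorem cosh_le_coshReIm_of_mem_sphere {z : ℂ} {r : ℝ} (hz : z ∈ sphere 0 r) :
    Real.cosh r ≤ coshReIm z := by
  rw [← mem_sphere_zero_iff_norm.mp hz, Complex.norm_eq_sqrt_sq_add_sq]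
  exact Real.cosh_sqrt_sq_add_sq_le z.re z.im

theorem laplacian_sub_smul_coshReIm {u : ℂ → ℝ} {z : ℂ} (hu : ContDiffAt ℝ 2 u z) (c : ℝ) :
    Δ (u - c • coshReIm) z = lap u z - 2 * (c * coshReIm z) := by
  have hcc : ContDiffAt ℝ 2 (c • coshReIm) z := (contDiff_coshReIm.const_smul c).contDiffAt
  rw [hu.laplacian_sub hcc,
    laplacian_smul c contDiff_coshReIm.contDiffAt, laplacian_coshReIm, lap_eq_laplacian hu,
    smul_eq_mul]
  ring

/-- Analytic core of Minsky's decay lemma (Lemma 3.7): if `u` is continuous on the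
closed disk of radius `d`, C² on the open disk, satisfies `Δu ≥ 2u` there and `u ≤ b`
on the closed disk, then `u(0) ≤ b / cosh d`. -/
theorem stmt_8 (d b : ℝ) (hd : 0 < d) (u : ℂ → ℝ)
    (hcont : ContinuousOn u (Metric.closedBall (0 : ℂ) d))
    (hC2 : ContDiffOn ℝ 2 u (Metric.ball (0 : ℂ) d))
    (hsub : ∀ z ∈ Metric.ball (0 : ℂ) d, 2 * u z ≤ lap u z)
    (hbd : ∀ z ∈ Metric.closedBall (0 : ℂ) d, u z ≤ b) :
    u 0 ≤ b / Real.cosh d := by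
  have h0 : (0 : ℂ) ∈ closedBall (0 : ℂ) d := mem_closedBall_self hd.le
  rcases le_or_gt b 0 with hb | hb
  · calc u 0 ≤ b := hbd 0 h0
      _ ≤ b / Real.cosh d := by
        simpa [neg_div] using div_le_self (neg_nonneg.mpr hb) (Real.one_le_cosh d)
  set c := b / Real.cosh d
  have hcc : ContDiff ℝ 2 (c • coshReIm) := contDiff_coshReIm.const_smul c
  have hv : (u - c • coshReIm) 0 ≤ 0 := by
    refine nonpos_of_laplacian_pos_of_nonpos_on_sphere (hcont.sub hcc.continuous.continuousOn)
      (hC2.sub hcc.contDiffOn) (fun z hz hvz => ?_) (fun z hz => ?_) h0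
    · rw [laplacian_sub_smul_coshReIm (hC2.contDiffAt (isOpen_ball.mem_nhds hz))]
      simp only [Pi.sub_apply, Pi.smul_apply, smul_eq_mul] at hvz
      linarith [hsub z hz]
    · have hbc : b ≤ c * coshReIm z :=
        calc b = c * Real.cosh d := (div_mul_cancel₀ b (Real.cosh_pos d).ne').symm
          _ ≤ c * coshReIm z := by gcongr; exact cosh_le_coshReIm_of_mem_sphere hz
      simp only [Pi.sub_apply, Pi.smul_apply, smul_eq_mul]
      linarith [hbd z (sphere_subset_closedBall hz)]
  simpa [coshReIm_zero] using hv
end
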